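/- Let t_0 ∈ ℕ and t_1,…,t_4 positive integers, n = t_0 + t_1 + t_2 + t_3 + t_4, and let D = TE(K^-, t) be the twin expansion of the negative tetrahedron. Then the characteristic polynomial of the Hermitian adjacency matrix of D equals μ^{n-4}(μ^4 - (Σ_{1≤i<j≤4} t_i t_j)μ^2 + 2(Σ_{1≤i<j<k≤4} t_i t_j t_k)μ - 3 t_1 t_2 t_3 t_4). -/

import Mathlib

open Complex Matrix Polynomial

/-- Hermitian adjacency matrix of the negative tetrahedron `K⁻`. -/
def negTetraH : Matrix (Fin 4) (Fin 4) ℂ :=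
  !![0, 1, I, -I; 1, 0, -I, I; -I, I, 0, 1; I, -I, 1, 0]

/-- Index type of the twin expansion `TE(K⁻, [t₀, t₁, t₂, t₃, t₄])`. -/
abbrev TETetIdx (t₀ t₁ t₂ t₃ t₄ : ℕ) :=
  Fin t₀ ⊕ (Fin t₁ ⊕ Fin t₂ ⊕ Fin t₃ ⊕ Fin t₄)

/-- The class of a vertex of the twin expansion: `none` for isolated vertices,
`some u` for a twin of vertex `u` of `K⁻`. -/
def tetClass {t₀ t₁ t₂ t₃ t₄ : ℕ} : TETetIdx t₀ t₁ t₂ t₃ t₄ → Option (Fin 4)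
  | .inl _ => none
  | .inr (.inl _) => some 0
  | .inr (.inr (.inl _)) => some 1
  | .inr (.inr (.inr (.inl _))) => some 2
  | .inr (.inr (.inr (.inr _))) => some 3

/-- Hermitian adjacency matrix of the twin expansion `TE(K⁻, [t₀, t₁, t₂, t₃, t₄])`. -/
def TETetH (t₀ t₁ t₂ t₃ t₄ : ℕ) :
    Matrix (TETetIdx t₀ t₁ t₂ t₃ t₄) (TETetIdx t₀ t₁ t₂ t₃ t₄) ℂ :=
  Matrix.of fun x y =>
    match tetClass x, tetClass y with
    | some u, some v => if u = v then 0 else negTetraH u v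
    | _, _ => 0


-- Schur complement Sylvester identity over a field
lemma key_det {K : Type*} [Field K] {m n : Type*} [Fintype m] [Fintype n]
    [DecidableEq m] [DecidableEq n] (x : K) (hx : x ≠ 0)
    (A : Matrix m n K) (B : Matrix n m K) :
    x ^ (Fintype.card n) * det (x • (1 : Matrix m m K) - A * B)
      = x ^ (Fintype.card m) * det (x • (1 : Matrix n n K) - B * A) := by
  letI In : Invertible (x • (1 : Matrix n n K)) :=
    ⟨x⁻¹ • 1, by rw [Matrix.smul_mul, Matrix.mul_smul, smul_smul,
      inv_mul_cancel₀ hx, one_smul, one_mul], by rw [Matrix.smul_mul, Matrix.mul_smul, smul_smul,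
      mul_inv_cancel₀ hx, one_smul, one_mul]⟩
  letI Im : Invertible (x • (1 : Matrix m m K)) :=
    ⟨x⁻¹ • 1, by rw [Matrix.smul_mul, Matrix.mul_smul, smul_smul,
      inv_mul_cancel₀ hx, one_smul, one_mul], by rw [Matrix.smul_mul, Matrix.mul_smul, smul_smul,
      mul_inv_cancel₀ hx, one_smul, one_mul]⟩
  have h1 := Matrix.det_fromBlocks₂₂ (x • (1 : Matrix m m K)) A (x • B) (x • (1 : Matrix n n K))
  have h2 := Matrix.det_fromBlocks₁₁ (x • (1 : Matrix m m K)) A (x • B) (x • (1 : Matrix n n K))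
  have e1 : ⅟(x • (1 : Matrix n n K)) = x⁻¹ • 1 := rfl
  have e2 : ⅟(x • (1 : Matrix m m K)) = x⁻¹ • 1 := rfl
  rw [e1] at h1; rw [e2] at h2
  have sAB : A * (x⁻¹ • (1 : Matrix n n K)) * (x • B) = A * B := by
    simp [Matrix.mul_smul, Matrix.smul_mul, smul_smul, inv_mul_cancel₀ hx, mul_inv_cancel₀ hx]
  have sBA : (x • B) * (x⁻¹ • (1 : Matrix m m K)) * A = B * A := by
    simp [Matrix.mul_smul, Matrix.smul_mul, smul_smul, inv_mul_cancel₀ hx, mul_inv_cancel₀ hx]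
  rw [sAB, Matrix.det_smul, det_one, mul_one] at h1
  rw [sBA, Matrix.det_smul, det_one, mul_one] at h2
  rw [← h1, h2]

set_option synthInstance.maxHeartbeats 400000 in
lemma charpoly_map_frac {k : Type*} [Fintype k] [DecidableEq k] (M : Matrix k k ℂ) :
    algebraMap ℂ[X] (RatFunc ℂ) M.charpoly
      = det ((algebraMap ℂ[X] (RatFunc ℂ) X) • (1 : Matrix k k (RatFunc ℂ))
          - M.map ((algebraMap ℂ[X] (RatFunc ℂ)).comp C)) := by
  rw [Matrix.charpoly, ← RingHom.coe_coe, RingHom.map_det]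
  congr 1
  ext i j
  by_cases h : i = j
  · subst h
    simp [charmatrix_apply_eq, Matrix.one_apply]
  · simp [charmatrix_apply_ne _ _ _ h, Matrix.one_apply_ne h, Matrix.one_apply]

set_option synthInstance.maxHeartbeats 400000 in
lemma charpoly_sylvester {m n : Type*} [Fintype m] [Fintype n]
    [DecidableEq m] [DecidableEq n] (A : Matrix m n ℂ) (B : Matrix n m ℂ) :
    X ^ (Fintype.card n) * (A * B).charpoly = X ^ (Fintype.card m) * (B * A).charpoly := by
  apply IsFractionRing.injective ℂ[X] (RatFunc ℂ)
  have hx : algebraMap ℂ[X] (RatFunc ℂ) X ≠ 0 :=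
    (map_ne_zero_iff _ (IsFractionRing.injective ℂ[X] (RatFunc ℂ))).mpr Polynomial.X_ne_zero
  have := key_det (algebraMap ℂ[X] (RatFunc ℂ) X) hx
    (A.map ((algebraMap ℂ[X] (RatFunc ℂ)).comp C)) (B.map ((algebraMap ℂ[X] (RatFunc ℂ)).comp C))
  rw [_root_.map_mul, _root_.map_mul, map_pow, map_pow, charpoly_map_frac, charpoly_map_frac,
    Matrix.map_mul, Matrix.map_mul]
  exact this

theorem my_det_fin_four {R : Type*} [CommRing R] (M : Matrix (Fin 4) (Fin 4) R) :
    M.det =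
      M 0 0 * (M 1 1 * M 2 2 * M 3 3 - M 1 1 * M 2 3 * M 3 2 - M 1 2 * M 2 1 * M 3 3
        + M 1 2 * M 2 3 * M 3 1 + M 1 3 * M 2 1 * M 3 2 - M 1 3 * M 2 2 * M 3 1)
      - M 0 1 * (M 1 0 * M 2 2 * M 3 3 - M 1 0 * M 2 3 * M 3 2 - M 1 2 * M 2 0 * M 3 3
        + M 1 2 * M 2 3 * M 3 0 + M 1 3 * M 2 0 * M 3 2 - M 1 3 * M 2 2 * M 3 0)
      + M 0 2 * (M 1 0 * M 2 1 * M 3 3 - M 1 0 * M 2 3 * M 3 1 - M 1 1 * M 2 0 * M 3 3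
        + M 1 1 * M 2 3 * M 3 0 + M 1 3 * M 2 0 * M 3 1 - M 1 3 * M 2 1 * M 3 0)
      - M 0 3 * (M 1 0 * M 2 1 * M 3 2 - M 1 0 * M 2 2 * M 3 1 - M 1 1 * M 2 0 * M 3 2
        + M 1 1 * M 2 2 * M 3 0 + M 1 2 * M 2 0 * M 3 1 - M 1 2 * M 2 1 * M 3 0) := by
  rw [Matrix.det_succ_row_zero, Fin.sum_univ_four]
  norm_num [Matrix.det_fin_three, Matrix.submatrix_apply, Fin.succAbove, Fin.lt_def,
    show (Fin.succ 2 : Fin 4) = 3 from rfl, show ((3:Fin 4):ℕ) = 3 from rfl,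
    show ((2:Fin 4):ℕ) = 2 from rfl, show ((1:Fin 4):ℕ) = 1 from rfl,
    show (Fin.castSucc 2 : Fin 4) = 2 from rfl]
  ring
set_option maxHeartbeats 1000000 in
lemma charpoly_HD (c : Fin 4 → ℂ) :
    (negTetraH * Matrix.diagonal c).charpoly
      = X ^ 4
        - C (c 0 * c 1 + c 0 * c 2 + c 0 * c 3 + c 1 * c 2 + c 1 * c 3 + c 2 * c 3) * X ^ 2
        + C (2 * (c 0 * c 1 * c 2 + c 0 * c 1 * c 3 + c 0 * c 2 * c 3 + c 1 * c 2 * c 3)) * X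
        - C (3 * (c 0 * c 1 * c 2 * c 3)) := by
  have h2 : (C I : ℂ[X]) ^ 2 = -1 := by
    rw [← map_pow, I_sq, map_neg, Polynomial.C_1]
  have h3 : (C I : ℂ[X]) ^ 3 = -C I := by
    rw [pow_succ, h2]; ring
  have h4 : (C I : ℂ[X]) ^ 4 = 1 := by
    rw [show (4:ℕ)=2*2 from rfl, pow_mul, h2]; ring
  have hM : negTetraH * Matrix.diagonal c
      = !![0, c 1, I * c 2, -I * c 3; c 0, 0, -I * c 2, I * c 3;
           -I * c 0, I * c 1, 0, c 3; I * c 0, -I * c 1, c 2, 0] := by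
    ext i j
    rw [Matrix.mul_diagonal]
    fin_cases i <;> fin_cases j <;> simp [negTetraH]
  have hch : charmatrix (negTetraH * Matrix.diagonal c)
      = !![X, -C (c 1), -(C I * C (c 2)), C I * C (c 3);
           -C (c 0), X, C I * C (c 2), -(C I * C (c 3));
           C I * C (c 0), -(C I * C (c 1)), X, -C (c 3);
           -(C I * C (c 0)), C I * C (c 1), -C (c 2), X] := by
    rw [hM]
    refine Matrix.ext fun i j => ?_
    fin_cases i <;> fin_cases j <;>
      simp (config := { decide := true }) [charmatrix_apply, Matrix.diagonal_apply,
        _root_.map_mul, map_neg]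
  rw [Matrix.charpoly, hch, my_det_fin_four]
  simp only [Matrix.of_apply, Matrix.cons_val', Matrix.cons_val_zero, Matrix.cons_val_one,
    Matrix.cons_val_two, Matrix.cons_val_three, Matrix.head_cons, Matrix.empty_val']
  norm_num [_root_.map_mul, _root_.map_add, Polynomial.C_mul]
  ring_nf
  simp only [h2, h3, h4, map_ofNat (C : ℂ →+* ℂ[X]) 2,
    map_ofNat (C : ℂ →+* ℂ[X]) 3]
  ring
def Lmat (t₀ t₁ t₂ t₃ t₄ : ℕ) : Matrix (TETetIdx t₀ t₁ t₂ t₃ t₄) (Fin 4) ℂ :=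
  Matrix.of fun x u => if tetClass x = some u then 1 else 0

lemma hfact (t₀ t₁ t₂ t₃ t₄ : ℕ) :
    TETetH t₀ t₁ t₂ t₃ t₄ = Lmat t₀ t₁ t₂ t₃ t₄ * negTetraH * (Lmat t₀ t₁ t₂ t₃ t₄)ᵀ := by
  ext x y
  rw [Matrix.mul_apply]
  simp only [Matrix.mul_apply, Matrix.transpose_apply, Fin.sum_univ_four]
  rcases x with x | x | x | x | x <;> rcases y with y | y | y | y | y <;>
    simp [TETetH, tetClass, Lmat, negTetraH]

lemma hLtL (t₀ t₁ t₂ t₃ t₄ : ℕ) :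
    (Lmat t₀ t₁ t₂ t₃ t₄)ᵀ * Lmat t₀ t₁ t₂ t₃ t₄
      = Matrix.diagonal ![(t₁ : ℂ), t₂, t₃, t₄] := by
  ext u v
  rw [Matrix.mul_apply]
  simp only [Matrix.transpose_apply, Fintype.sum_sum_type]
  fin_cases u <;> fin_cases v <;>
    simp [Lmat, tetClass, Matrix.diagonal_apply, Finset.sum_const, mul_comm]
theorem stmt_16 (t₀ t₁ t₂ t₃ t₄ : ℕ)
    (h₁ : 0 < t₁) (h₂ : 0 < t₂) (h₃ : 0 < t₃) (h₄ : 0 < t₄) :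
    (TETetH t₀ t₁ t₂ t₃ t₄).charpoly
      = X ^ (t₀ + t₁ + t₂ + t₃ + t₄ - 4) *
        (X ^ 4
          - C ((t₁*t₂ + t₁*t₃ + t₁*t₄ + t₂*t₃ + t₂*t₄ + t₃*t₄ : ℕ) : ℂ) * X ^ 2
          + C ((2 * (t₁*t₂*t₃ + t₁*t₂*t₄ + t₁*t₃*t₄ + t₂*t₃*t₄) : ℕ) : ℂ) * X
          - C ((3 * (t₁*t₂*t₃*t₄) : ℕ) : ℂ)) := by
  set c : Fin 4 → ℂ := ![(t₁ : ℂ), t₂, t₃, t₄] with hc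
  have key := charpoly_sylvester (Lmat t₀ t₁ t₂ t₃ t₄) (negTetraH * (Lmat t₀ t₁ t₂ t₃ t₄)ᵀ)
  rw [← Matrix.mul_assoc, ← hfact, Matrix.mul_assoc, hLtL] at key
  have hcard4 : Fintype.card (Fin 4) = 4 := by simp
  have hcardN : Fintype.card (TETetIdx t₀ t₁ t₂ t₃ t₄) = t₀ + t₁ + t₂ + t₃ + t₄ := by
    simp [Fintype.card_sum]; omega
  rw [hcard4, hcardN, ← hc, charpoly_HD] at key
  have hQ : (X ^ 4
          - C ((t₁*t₂ + t₁*t₃ + t₁*t₄ + t₂*t₃ + t₂*t₄ + t₃*t₄ : ℕ) : ℂ) * X ^ 2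
          + C ((2 * (t₁*t₂*t₃ + t₁*t₂*t₄ + t₁*t₃*t₄ + t₂*t₃*t₄) : ℕ) : ℂ) * X
          - C ((3 * (t₁*t₂*t₃*t₄) : ℕ) : ℂ))
      = X ^ 4
        - C (c 0 * c 1 + c 0 * c 2 + c 0 * c 3 + c 1 * c 2 + c 1 * c 3 + c 2 * c 3) * X ^ 2
        + C (2 * (c 0 * c 1 * c 2 + c 0 * c 1 * c 3 + c 0 * c 2 * c 3 + c 1 * c 2 * c 3)) * X
        - C (3 * (c 0 * c 1 * c 2 * c 3)) := by
    have e0 : c 0 = (t₁ : ℂ) := rfl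
    have e1 : c 1 = (t₂ : ℂ) := rfl
    have e2 : c 2 = (t₃ : ℂ) := rfl
    have e3 : c 3 = (t₄ : ℂ) := rfl
    rw [e0, e1, e2, e3]
    push_cast
    ring_nf
  rw [hQ]
  apply mul_left_cancel₀ (pow_ne_zero 4 (Polynomial.X_ne_zero (R := ℂ)))
  rw [key]
  conv_rhs => rw [← mul_assoc, ← pow_add,
    show 4 + (t₀ + t₁ + t₂ + t₃ + t₄ - 4) = t₀ + t₁ + t₂ + t₃ + t₄ by omega]
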